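/- With f = X(X−1)(X−α₁)(X−α₂)(X−α₃) ∈ 𝔽_p[X] and c_k the coefficient of X^k in f^{(p−1)/2}, one has ∑_{a ∈ 𝔽_p} ( a·(1+a)·(α₁+a)·(α₂+a)·(α₃+a) )^{(p−1)/2} = (−1)^{(p−1)/2} · ( −c_{p−1} − c_{2p−2} ). In particular this sum vanishes if and only if the trace c_{p−1} + c_{2p−2} of the Cartier–Manin matrix vanishes. -/

import Mathlib

open Polynomial Finset

/-!
The product equals `-f(-a)`, so after reindexing the sum is `(-1)^m ∑ₐ (f^m)(a)` with
`m = (p-1)/2`. Since `f^m` has degree `5m < 3(p-1)` and `∑ₐ aⁱ` is `-1` when `i` is a positive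
multiple of `p-1` and `0` otherwise, only the coefficients at `p-1` and `2(p-1)` survive.
-/

namespace FiniteField

variable {K : Type*} [Field K] [Fintype K]

local notation "q" => Fintype.card K

theorem sum_pow_of_ne_zero [DecidableEq K] {i : ℕ} (hi : i ≠ 0) :
    ∑ x : K, x ^ i = if q - 1 ∣ i then -1 else 0 := by
  rw [Fintype.sum_eq_add_sum_subtype_ne _ 0, zero_pow hi, zero_add,
    ← sum_pow_units K i, ← unitsEquivNeZero.sum_comp]
  rfl

theorem sum_pow_of_lt_three_mul {i : ℕ} (hi : i < 3 * (q - 1)) :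
    ∑ x : K, x ^ i = -((if i = q - 1 then 1 else 0) + if i = 2 * (q - 1) then 1 else 0) := by
  classical
  have hq : 2 ≤ q := Fintype.one_lt_card
  rcases eq_or_ne i 0 with rfl | hi0
  · simp [show 0 ≠ q - 1 by omega, show 0 ≠ 2 * (q - 1) by omega]
  rw [sum_pow_of_ne_zero hi0]
  have h_dvd : q - 1 ∣ i ↔ i = q - 1 ∨ i = 2 * (q - 1) := by
    constructor
    · rintro ⟨j, rfl⟩
      have : j < 3 := Nat.lt_of_mul_lt_mul_left (by rwa [mul_comm 3] at hi)
      interval_cases j <;> omega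
    · rintro (rfl | rfl)
      exacts [dvd_rfl, dvd_mul_left _ _]
  by_cases h1 : i = q - 1 <;> by_cases h2 : i = 2 * (q - 1) <;> simp [h_dvd, h1, h2] <;> omega

theorem sum_eval_eq_neg_coeff_add {g : K[X]} (hg : g.natDegree < 3 * (q - 1)) :
    ∑ x : K, g.eval x = -(g.coeff (q - 1) + g.coeff (2 * (q - 1))) := by
  have hq : 2 ≤ q := Fintype.one_lt_card
  simp_rw [eval_eq_sum_range' hg]
  rw [sum_comm]
  simp_rw [← mul_sum]
  rw [sum_congr rfl fun i hi => by rw [sum_pow_of_lt_three_mul (mem_range.mp hi)]]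
  simp [mul_add, sum_add_distrib, show q - 1 < 3 * (q - 1) by omega,
    show 2 * (q - 1) < 3 * (q - 1) by omega]

end FiniteField

theorem sum_shifted_eq_neg_trace_general (p : ℕ) [Fact p.Prime]
    (α₁ α₂ α₃ : ZMod p)
    (f : Polynomial (ZMod p))
    (hf : f = X * (X - 1) * (X - C α₁) * (X - C α₂) * (X - C α₃))
    (c : ℕ → ZMod p) (hc : ∀ k, c k = (f ^ ((p - 1) / 2)).coeff k) :
    ∑ a : ZMod p,
        (a * (1 + a) * (α₁ + a) * (α₂ + a) * (α₃ + a)) ^ ((p - 1) / 2) =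
      (-1) ^ ((p - 1) / 2) * (-c (p - 1) - c (2 * p - 2)) := by
  set m := (p - 1) / 2
  have hp : 2 ≤ p := (Fact.out : p.Prime).two_le
  have h_factor : ∀ a : ZMod p,
      a * (1 + a) * (α₁ + a) * (α₂ + a) * (α₃ + a) = -f.eval (-a) := by
    intro a
    simp only [hf, eval_mul, eval_sub, eval_X, eval_one, eval_C]
    ring
  have h_deg : (f ^ m).natDegree < 3 * (Fintype.card (ZMod p) - 1) := by
    have : f.natDegree ≤ 5 := hf ▸ by compute_degree
    rw [ZMod.card]
    exact natDegree_pow_le.trans_lt ((Nat.mul_le_mul_left m this).trans_lt (by omega))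
  calc ∑ a : ZMod p, (a * (1 + a) * (α₁ + a) * (α₂ + a) * (α₃ + a)) ^ m
      = (-1) ^ m * ∑ a : ZMod p, (f ^ m).eval (-a) := by
        simp_rw [h_factor, neg_pow (f.eval _), mul_sum, eval_pow]
    _ = (-1) ^ m * ∑ a : ZMod p, (f ^ m).eval a := by
        rw [← Equiv.sum_comp (Equiv.neg (ZMod p)) fun a => (f ^ m).eval a]; rfl
    _ = (-1) ^ m * (-c (p - 1) - c (2 * p - 2)) := by
        rw [FiniteField.sum_eval_eq_neg_coeff_add h_deg, ZMod.card, hc, hc,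
          show 2 * (p - 1) = 2 * p - 2 by omega, neg_add']

/-- For the quintic `f = X(X-1)(X-α₁)(X-α₂)(X-α₃)` over `𝔽_p`, one has
`∑_{a ∈ 𝔽_p} (a(1+a)(α₁+a)(α₂+a)(α₃+a))^((p-1)/2) = (-1)^((p-1)/2)·(-c_{p-1} - c_{2p-2})`. -/
theorem sum_shifted_eq_neg_trace (p : ℕ) [Fact p.Prime] (hp : 5 ≤ p)
    (α₁ α₂ α₃ : ZMod p)
    (h12 : α₁ ≠ α₂) (h13 : α₁ ≠ α₃) (h23 : α₂ ≠ α₃)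
    (h10 : α₁ ≠ 0) (h20 : α₂ ≠ 0) (h30 : α₃ ≠ 0)
    (h11 : α₁ ≠ 1) (h21 : α₂ ≠ 1) (h31 : α₃ ≠ 1)
    (f : Polynomial (ZMod p))
    (hf : f = X * (X - 1) * (X - C α₁) * (X - C α₂) * (X - C α₃))
    (c : ℕ → ZMod p) (hc : ∀ k, c k = (f ^ ((p - 1) / 2)).coeff k) :
    ∑ a : ZMod p,
        (a * (1 + a) * (α₁ + a) * (α₂ + a) * (α₃ + a)) ^ ((p - 1) / 2) =
      (-1) ^ ((p - 1) / 2) * (-c (p - 1) - c (2 * p - 2)) :=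
  sum_shifted_eq_neg_trace_general p α₁ α₂ α₃ f hf c hc
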